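/- arXiv:2311.16403 — 6 statements merged into one kernel-verified Lean document; each statement's English description precedes it below -/
import Mathlib

section
/- Let p(C) be an n-dimensional DGCA with coefficient matrix C=(c_{ij}), and let J_C = {k ∈ [n] : c_{ij} = 0 for all i,j ≥ 1 with i+j = k}. Then {p_k : k ∈ J_C} is a minimal generating set of p(C) as an algebra; in particular 1 ∈ J_C, so J_C is nonempty. -/
/-- Bilinear multiplication determined by the coefficient matrix `c`:
`p_i p_j = c i j • p_{i+j}`. -/
def dmul {K : Type*} [Field K] (c : ℕ → ℕ → K) (x y : ℕ → K) : ℕ → K :=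
  fun m => ∑ i ∈ Finset.range (m + 1), c i (m - i) * x i * y (m - i)

/-- The carrier of the `n`-dimensional DGCA: functions supported on degrees `1,...,n`. -/
def carrierW (K : Type*) [Field K] (n : ℕ) : Set (ℕ → K) :=
  {x | ∀ m, m = 0 ∨ n < m → x m = 0}

/-- A subset closed under the (non-unital) algebra operations. -/
def IsSubalg {K : Type*} [Field K] (c : ℕ → ℕ → K) (T : Set (ℕ → K)) : Prop :=
  (0 : ℕ → K) ∈ T ∧ (∀ x ∈ T, ∀ y ∈ T, x + y ∈ T) ∧
    (∀ (a : K), ∀ x ∈ T, a • x ∈ T) ∧ (∀ x ∈ T, ∀ y ∈ T, dmul c x y ∈ T)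

/-- The subalgebra of the DGCA `p(C)` generated by a subset `S`. -/
def gen {K : Type*} [Field K] (n : ℕ) (c : ℕ → ℕ → K) (S : Set (ℕ → K)) : Set (ℕ → K) :=
  ⋂₀ {T | S ⊆ T ∧ T ⊆ carrierW K n ∧ IsSubalg c T}

/-! The indecomposable degrees `J_C` generate: by strong induction on `k`, a decomposable `p_k`
is a nonzero multiple of a product `p_i p_j` with `i, j < k`. They generate minimally: when
`m ∈ J_C`, every product lands in degrees other than `m`, so the functions vanishing at `m`
form a subalgebra; generators avoiding `p_m` stay inside it and cannot produce `p_m`. -/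

section

variable {K : Type*} [Field K]

section Gen

variable (n : ℕ) (c : ℕ → ℕ → K)

lemma subset_gen (S : Set (ℕ → K)) : S ⊆ gen n c S :=
  fun _ hx _ hT => hT.1 hx

lemma gen_subset {S T : Set (ℕ → K)} (hST : S ⊆ T) (hT : T ⊆ carrierW K n)
    (hTc : IsSubalg c T) : gen n c S ⊆ T :=
  Set.sInter_subset_of_mem ⟨hST, hT, hTc⟩

lemma gen_isSubalg (S : Set (ℕ → K)) : IsSubalg c (gen n c S) :=
  ⟨fun _ hT => hT.2.2.1,
    fun _ hx _ hy _ hT => hT.2.2.2.1 _ (hx _ hT) _ (hy _ hT),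
    fun a _ hx _ hT => hT.2.2.2.2.1 a _ (hx _ hT),
    fun _ hx _ hy _ hT => hT.2.2.2.2.2 _ (hx _ hT) _ (hy _ hT)⟩

end Gen

def IsSubalg.toSubmodule {c : ℕ → ℕ → K} {T : Set (ℕ → K)} (hT : IsSubalg c T) :
    Submodule K (ℕ → K) where
  carrier := T
  zero_mem' := hT.1
  add_mem' hx hy := hT.2.1 _ hx _ hy
  smul_mem' := hT.2.2.1

lemma dmul_single (c : ℕ → ℕ → K) (i j : ℕ) :
    dmul c (Pi.single i 1) (Pi.single j 1) = c i j • (Pi.single (i + j) 1 : ℕ → K) := by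
  funext m
  simp only [dmul, Pi.smul_apply, smul_eq_mul]
  by_cases hm : m = i + j
  · subst hm
    rw [Finset.sum_eq_single i (fun b _ hb => by simp [Pi.single_eq_of_ne hb])
      (fun h => absurd (Finset.mem_range.mpr (by omega)) h)]
    simp
  · refine (Finset.sum_eq_zero fun a ha => ?_).trans (by simp [Pi.single_eq_of_ne hm])
    have := Finset.mem_range.mp ha
    by_cases hai : a = i
    · subst hai
      simp [Pi.single_eq_of_ne (show m - a ≠ j by omega)]
    · simp [Pi.single_eq_of_ne hai]

lemma dmul_apply_eq_zero (c : ℕ → ℕ → K) {m : ℕ} (hm : ∀ i j, i + j = m → c i j = 0)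
    (x y : ℕ → K) : dmul c x y m = 0 :=
  Finset.sum_eq_zero fun i hi => by
    rw [hm i (m - i) (by have := Finset.mem_range.mp hi; omega), zero_mul, zero_mul]

def vanishingOn (K : Type*) [Field K] (M : Set ℕ) : Set (ℕ → K) :=
  {x | ∀ m ∈ M, x m = 0}

lemma vanishingOn_anti {M N : Set ℕ} (h : M ⊆ N) : vanishingOn K N ⊆ vanishingOn K M :=
  fun _ hx m hm => hx m (h hm)

lemma isSubalg_vanishingOn (c : ℕ → ℕ → K) {M : Set ℕ}
    (hM : ∀ m ∈ M, ∀ i j, i + j = m → c i j = 0) : IsSubalg c (vanishingOn K M) :=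
  ⟨fun _ _ => rfl,
    fun x hx y hy m hm => by simp [hx m hm, hy m hm],
    fun a x hx m hm => by simp [hx m hm],
    fun x _ y _ m hm => dmul_apply_eq_zero c (hM m hm) x y⟩

lemma carrierW_eq_vanishingOn (n : ℕ) :
    carrierW K n = vanishingOn K {m | m = 0 ∨ n < m} := rfl

lemma single_mem_carrierW {n m : ℕ} (h1 : 1 ≤ m) (hn : m ≤ n) :
    (Pi.single m 1 : ℕ → K) ∈ carrierW K n :=
  fun k hk => Pi.single_eq_of_ne (by omega) _

def IsIndecomposable (c : ℕ → ℕ → K) (m : ℕ) : Prop :=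
  ∀ i j, 1 ≤ i → 1 ≤ j → i + j = m → c i j = 0

section Subalgebra

variable {n : ℕ} {c : ℕ → ℕ → K}

lemma carrierW_isSubalg (hzero : ∀ i j, i = 0 ∨ j = 0 ∨ n < i + j → c i j = 0) :
    IsSubalg c (carrierW K n) := by
  rw [carrierW_eq_vanishingOn]
  exact isSubalg_vanishingOn c fun m hm i j hij => hzero i j (by rcases hm with h | h <;> omega)

lemma carrierW_subset_of_single_mem {T : Set (ℕ → K)} (hT : IsSubalg c T)
    (hsingle : ∀ k, 1 ≤ k → k ≤ n → Pi.single k 1 ∈ T) : carrierW K n ⊆ T := by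
  intro x hx
  have hsum : ∑ k ∈ Finset.Icc 1 n, Pi.single k (x k) = x := by
    funext m
    simp only [Finset.sum_apply, Finset.sum_pi_single, Finset.mem_Icc]
    split_ifs with hm
    · rfl
    · exact (hx m (by omega)).symm
  rw [← hsum]
  show _ ∈ hT.toSubmodule
  refine Submodule.sum_mem _ fun k hk => ?_
  rw [Finset.mem_Icc] at hk
  have hk_smul : Pi.single k (x k) = x k • (Pi.single k 1 : ℕ → K) := by
    rw [← Pi.single_smul', smul_eq_mul, mul_one]
  rw [hk_smul]
  exact hT.2.2.1 _ _ (hsingle k hk.1 hk.2)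

lemma single_mem_of_indecomposable_mem {T : Set (ℕ → K)} (hT : IsSubalg c T)
    (hind : ∀ k, 1 ≤ k → k ≤ n → IsIndecomposable c k → Pi.single k 1 ∈ T) :
    ∀ k, 1 ≤ k → k ≤ n → Pi.single k 1 ∈ T := by
  intro k
  induction k using Nat.strong_induction_on with
  | _ k ih =>
    intro hk1 hkn
    by_cases hk : IsIndecomposable c k
    · exact hind k hk1 hkn hk
    unfold IsIndecomposable at hk
    push Not at hk
    obtain ⟨i, j, hi, hj, rfl, hc⟩ := hk
    have hprod := hT.2.2.2 _ (ih i (by omega) hi (by omega)) _ (ih j (by omega) hj (by omega))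
    rw [dmul_single] at hprod
    simpa [smul_smul, hc] using hT.2.2.1 (c i j)⁻¹ _ hprod

lemma apply_eq_zero_of_mem_gen {m : ℕ}
    (hzero : ∀ i j, i = 0 ∨ j = 0 ∨ n < i + j → c i j = 0)
    (hm : IsIndecomposable c m) {S : Set (ℕ → K)}
    (hS : S ⊆ carrierW K n) (hSm : ∀ x ∈ S, x m = 0) {x : ℕ → K} (hx : x ∈ gen n c S) :
    x m = 0 := by
  have hsub : IsSubalg c (vanishingOn K (insert m {k | k = 0 ∨ n < k})) := by
    refine isSubalg_vanishingOn c fun k hk i j hij => ?_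
    rcases hk with rfl | hk
    · by_cases h : i = 0 ∨ j = 0
      · exact hzero i j (by omega)
      · exact hm i j (by omega) (by omega) hij
    · exact hzero i j (by rcases hk with h | h <;> omega)
  have hST : S ⊆ vanishingOn K (insert m {k | k = 0 ∨ n < k}) := by
    rintro y hy k (rfl | hk)
    exacts [hSm y hy, hS hy k hk]
  have hTW : vanishingOn K (insert m {k | k = 0 ∨ n < k}) ⊆ carrierW K n := by
    rw [carrierW_eq_vanishingOn]
    exact vanishingOn_anti (Set.subset_insert _ _)
  exact gen_subset n c hST hTW hsub hx m (Or.inl rfl)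

end Subalgebra

end

theorem stmt_2_general {K : Type*} [Field K] (n : ℕ) (hn : 1 ≤ n) (c : ℕ → ℕ → K)
    (hzero : ∀ i j, i = 0 ∨ j = 0 ∨ n < i + j → c i j = 0) :
    let J : Set ℕ := {m | 1 ≤ m ∧ m ≤ n ∧ ∀ i j, 1 ≤ i → 1 ≤ j → i + j = m → c i j = 0}
    let P : Set (ℕ → K) := (fun m => Pi.single m (1 : K)) '' J
    (1 : ℕ) ∈ J ∧
      gen n c P = carrierW K n ∧
      ∀ S ⊆ P, gen n c S = carrierW K n → S = P := by
  intro J P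
  have hP : P ⊆ carrierW K n := by
    rintro _ ⟨m, ⟨hm1, hmn, -⟩, rfl⟩
    exact single_mem_carrierW hm1 hmn
  have hgen : gen n c P = carrierW K n :=
    (gen_subset n c hP le_rfl (carrierW_isSubalg hzero)).antisymm <|
      carrierW_subset_of_single_mem (gen_isSubalg n c P) <|
        single_mem_of_indecomposable_mem (gen_isSubalg n c P) fun k hk1 hkn hk =>
          subset_gen n c P ⟨k, ⟨hk1, hkn, hk⟩, rfl⟩
  refine ⟨⟨le_rfl, hn, fun i j hi hj hij => by omega⟩, hgen, fun S hSP hS => hSP.antisymm ?_⟩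
  rintro _ ⟨m, ⟨hm1, hmn, hmJ⟩, rfl⟩
  by_contra hmS
  have hSm : ∀ x ∈ S, x m = 0 := by
    intro x hx
    obtain ⟨k, -, rfl⟩ := hSP hx
    exact Pi.single_eq_of_ne (by rintro rfl; exact hmS hx) _
  have hmem : (Pi.single m 1 : ℕ → K) ∈ gen n c S := hS ▸ single_mem_carrierW hm1 hmn
  simpa using apply_eq_zero_of_mem_gen hzero hmJ (hSP.trans hP) hSm hmem

theorem stmt_2 {K : Type*} [Field K] (n : ℕ) (hn : 1 ≤ n) (c : ℕ → ℕ → K)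
    (hsym : ∀ i j, c i j = c j i)
    (hassoc : ∀ i j l, 1 ≤ i → 1 ≤ j → 1 ≤ l →
      c j l * c i (j + l) = c i j * c (i + j) l)
    (hzero : ∀ i j, i = 0 ∨ j = 0 ∨ n < i + j → c i j = 0) :
    let J : Set ℕ := {m | 1 ≤ m ∧ m ≤ n ∧ ∀ i j, 1 ≤ i → 1 ≤ j → i + j = m → c i j = 0}
    let P : Set (ℕ → K) := (fun m => Pi.single m (1 : K)) '' J
    (1 : ℕ) ∈ J ∧
      gen n c P = carrierW K n ∧
      ∀ S ⊆ P, gen n c S = carrierW K n → S = P :=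
  stmt_2_general n hn c hzero
end

section
/- For a DGCA p(C) of dimension n, the group of graded algebra automorphisms of p(C) equals { (b_1,...,b_n) ∈ (k*)^n : b_{i+j} = b_i b_j whenever c_{ij} ≠ 0 }, where the tuple (b_i) acts by p_i ↦ b_i p_i. In particular, if two symmetric matrices C and C' in M_n have the same distribution of nonzero entries, then Aut(p(C)) = Aut(p(C')) as subgroups of (k*)^n. -/
section

variable {K : Type*} [Field K] {c : ℕ → ℕ → K}

lemma dmul_add_of_forall_ne {x y : ℕ → K} {i j : ℕ} (hx : ∀ t, t ≠ i → x t = 0) :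
    dmul c x y (i + j) = c i j * x i * y j := by
  unfold dmul
  rw [Finset.sum_eq_single_of_mem i (Finset.mem_range.mpr (by omega))]
  · rw [Nat.add_sub_cancel_left]
  · intro t _ ht
    rw [hx t ht, mul_zero, zero_mul]

lemma mul_dmul_eq_dmul_mul_iff (b : ℕ → K) :
    (∀ x y : ℕ → K, ∀ m, b m * dmul c x y m =
        dmul c (fun i => b i * x i) (fun i => b i * y i) m) ↔
      ∀ i j, c i j ≠ 0 → b (i + j) = b i * b j := by
  constructor
  · intro h i j hc
    have hbasis := h (Pi.single i 1) (Pi.single j 1) (i + j)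
    have hsupp : ∀ (a : ℕ → K) t, t ≠ i → a t * Pi.single (M := fun _ => K) i 1 t = 0 :=
      fun a t ht => by rw [Pi.single_eq_of_ne ht, mul_zero]
    rw [dmul_add_of_forall_ne (fun t ht => Pi.single_eq_of_ne ht 1),
      dmul_add_of_forall_ne (hsupp b)] at hbasis
    simp only [Pi.single_eq_same, mul_one] at hbasis
    exact mul_left_cancel₀ hc (by linear_combination hbasis)
  · intro h x y m
    unfold dmul
    rw [Finset.mul_sum]
    refine Finset.sum_congr rfl fun t ht => ?_
    by_cases hc : c t (m - t) = 0
    · simp only [hc, zero_mul, mul_zero]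
    · have hm : t + (m - t) = m := by
        have := Finset.mem_range.mp ht
        omega
      have hb := h t (m - t) hc
      rw [hm] at hb
      rw [hb]
      ring

lemma forall_ne_zero_iff_of_support {n : ℕ} (hzero : ∀ i j, i = 0 ∨ j = 0 ∨ n < i + j → c i j = 0)
    (P : ℕ → ℕ → Prop) :
    (∀ i j, c i j ≠ 0 → P i j) ↔ ∀ i j, 1 ≤ i → 1 ≤ j → i + j ≤ n → c i j ≠ 0 → P i j := by
  refine ⟨fun h i j _ _ _ hc => h i j hc, fun h i j hc => ?_⟩
  have hsupp : ¬ (i = 0 ∨ j = 0 ∨ n < i + j) := fun hij => hc (hzero i j hij)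
  exact h i j (by omega) (by omega) (by omega) hc

end

theorem stmt_3_general {K : Type*} [Field K] (n : ℕ) (c c' : ℕ → ℕ → K)
    (hzero : ∀ i j, i = 0 ∨ j = 0 ∨ n < i + j → c i j = 0) :
    -- a tuple of nonzero scalars acts (by `p_i ↦ b_i p_i`) as a graded algebra
    -- automorphism of `p(C)` iff `b_{i+j} = b_i b_j` whenever `c_{ij} ≠ 0`
    ((∀ b : ℕ → K, (∀ i, 1 ≤ i → i ≤ n → b i ≠ 0) →
      ((∀ x y : ℕ → K, ∀ m, b m * dmul c x y m =
          dmul c (fun i => b i * x i) (fun i => b i * y i) m) ↔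
        ∀ i j, 1 ≤ i → 1 ≤ j → i + j ≤ n → c i j ≠ 0 → b (i + j) = b i * b j)) ∧
    -- and if `C ∼ C'` (same distribution of nonzero entries) then the two
    -- automorphism groups coincide (as subsets of `(k*)^n`)
    ((∀ i j, c i j = 0 ↔ c' i j = 0) →
      ∀ b : ℕ → K,
        ((∀ i j, 1 ≤ i → 1 ≤ j → i + j ≤ n → c i j ≠ 0 → b (i + j) = b i * b j) ↔
          (∀ i j, 1 ≤ i → 1 ≤ j → i + j ≤ n → c' i j ≠ 0 → b (i + j) = b i * b j)))) := by
  refine ⟨fun b _ => ?_, fun hpattern b => ?_⟩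
  · rw [mul_dmul_eq_dmul_mul_iff, forall_ne_zero_iff_of_support hzero]
  · simp only [ne_eq, hpattern]

theorem stmt_3 {K : Type*} [Field K] (n : ℕ) (hn : 1 ≤ n) (c c' : ℕ → ℕ → K)
    (hsym : ∀ i j, c i j = c j i)
    (hassoc : ∀ i j l, 1 ≤ i → 1 ≤ j → 1 ≤ l →
      c j l * c i (j + l) = c i j * c (i + j) l)
    (hzero : ∀ i j, i = 0 ∨ j = 0 ∨ n < i + j → c i j = 0)
    (hsym' : ∀ i j, c' i j = c' j i)
    (hassoc' : ∀ i j l, 1 ≤ i → 1 ≤ j → 1 ≤ l →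
      c' j l * c' i (j + l) = c' i j * c' (i + j) l)
    (hzero' : ∀ i j, i = 0 ∨ j = 0 ∨ n < i + j → c' i j = 0) :
    -- a tuple of nonzero scalars acts (by `p_i ↦ b_i p_i`) as a graded algebra
    -- automorphism of `p(C)` iff `b_{i+j} = b_i b_j` whenever `c_{ij} ≠ 0`
    ((∀ b : ℕ → K, (∀ i, 1 ≤ i → i ≤ n → b i ≠ 0) →
      ((∀ x y : ℕ → K, ∀ m, b m * dmul c x y m =
          dmul c (fun i => b i * x i) (fun i => b i * y i) m) ↔
        ∀ i j, 1 ≤ i → 1 ≤ j → i + j ≤ n → c i j ≠ 0 → b (i + j) = b i * b j)) ∧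
    -- and if `C ∼ C'` (same distribution of nonzero entries) then the two
    -- automorphism groups coincide (as subsets of `(k*)^n`)
    ((∀ i j, c i j = 0 ↔ c' i j = 0) →
      ∀ b : ℕ → K,
        ((∀ i j, 1 ≤ i → 1 ≤ j → i + j ≤ n → c i j ≠ 0 → b (i + j) = b i * b j) ↔
          (∀ i j, 1 ≤ i → 1 ≤ j → i + j ≤ n → c' i j ≠ 0 → b (i + j) = b i * b j)))) :=
  stmt_3_general n c c' hzero
end

section
/- Let k be algebraically closed, C ∈ M_{n-1}, and θ a graded 2-cocycle of p(C) with values in V = k·p_n. For every b' ∈ k* there exists a graded algebra automorphism σ of p(C) such that θ∘(σ×σ) = b'·θ; consequently p(C)_{θ∘(σ×σ)} ≅ p(C)_θ. Concretely, for the automorphism φ_b: p_i ↦ b^i p_i one has θ∘(φ_b×φ_b) = b^n θ. -/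
/-- The bilinear form (coefficient of `p_n`) associated with a 2-cocycle tuple `t`. -/
def Bform {K : Type*} [Field K] (n : ℕ) (t : ℕ → K) (x y : ℕ → K) : K :=
  ∑ i ∈ Finset.Ico 1 n, t i * x i * y (n - i)

/-- Coefficient matrix of the central extension `p(C)_θ`. -/
def Dmat {K : Type*} [Field K] (n : ℕ) (c : ℕ → ℕ → K) (t : ℕ → K) : ℕ → ℕ → K :=
  fun i j => if i + j = n ∧ 1 ≤ i ∧ 1 ≤ j then t i else c i j

section Rescaling

variable {K : Type*} [Field K]

theorem Bform_pow_mul (n : ℕ) (t : ℕ → K) (b : K) (x y : ℕ → K) :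
    Bform n t (fun i => b ^ i * x i) (fun i => b ^ i * y i) = b ^ n * Bform n t x y := by
  rw [Bform, Bform, Finset.mul_sum]
  refine Finset.sum_congr rfl fun i hi => ?_
  rw [← pow_mul_pow_sub b (Finset.mem_Ico.mp hi).2.le]
  ring

def diagEquiv (d : ℕ → K) (hd : ∀ i, d i ≠ 0) : (ℕ → K) ≃ₗ[K] (ℕ → K) :=
  LinearEquiv.piCongrRight fun i => LinearEquiv.smulOfNeZero K K (d i) (hd i)

theorem diagEquiv_apply (d : ℕ → K) (hd : ∀ i, d i ≠ 0) (x : ℕ → K) :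
    diagEquiv d hd x = fun i => d i * x i := rfl

theorem diagEquiv_single (d : ℕ → K) (hd : ∀ i, d i ≠ 0) (i : ℕ) :
    diagEquiv d hd (Pi.single i 1) = Pi.single i (d i) := by
  funext j
  rcases eq_or_ne j i with rfl | h
  · simp [diagEquiv_apply]
  · simp [diagEquiv_apply, h]

theorem diagEquiv_dmul (d : ℕ → K) (hd : ∀ i, d i ≠ 0) {c c' : ℕ → ℕ → K}
    (hcd : ∀ i j, d (i + j) * c' i j = c i j * (d i * d j)) (x y : ℕ → K) :
    diagEquiv d hd (dmul c' x y) = dmul c (diagEquiv d hd x) (diagEquiv d hd y) := by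
  funext m
  simp only [diagEquiv_apply, dmul, Finset.mul_sum]
  refine Finset.sum_congr rfl fun i hi => ?_
  have hcd' := hcd i (m - i)
  rw [Nat.add_sub_cancel' (Nat.lt_succ_iff.mp (Finset.mem_range.mp hi))] at hcd'
  linear_combination x i * y (m - i) * hcd'

def rescaleTop (n : ℕ) (b' : K) : ℕ → K :=
  Function.update 1 n b'⁻¹

theorem rescaleTop_ne_zero (n : ℕ) {b' : K} (hb' : b' ≠ 0) (i : ℕ) : rescaleTop n b' i ≠ 0 := by
  rcases eq_or_ne i n with rfl | h
  · simpa [rescaleTop] using hb'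
  · simp [rescaleTop, h]

theorem rescaleTop_mul_Dmat (n : ℕ) {c : ℕ → ℕ → K}
    (hzero : ∀ i j, i = 0 ∨ j = 0 ∨ n - 1 < i + j → c i j = 0) (t : ℕ → K)
    {b' : K} (hb' : b' ≠ 0) (i j : ℕ) :
    rescaleTop n b' (i + j) * Dmat n c (fun i => b' * t i) i j =
      Dmat n c t i j * (rescaleTop n b' i * rescaleTop n b' j) := by
  by_cases hij : i + j = n ∧ 1 ≤ i ∧ 1 ≤ j
  · simp only [Dmat, if_pos hij, rescaleTop, Function.update_apply, if_pos hij.1]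
    rw [if_neg (by omega), if_neg (by omega), Pi.one_apply, Pi.one_apply]
    field_simp
  · simp only [Dmat, if_neg hij]
    by_cases hc : c i j = 0
    · simp [hc]
    · have hlt : ¬(i = 0 ∨ j = 0 ∨ n - 1 < i + j) := mt (hzero i j) hc
      simp only [rescaleTop, Function.update_apply]
      rw [if_neg (by omega), if_neg (by omega), if_neg (by omega)]
      simp

end Rescaling

theorem stmt_8_general {K : Type*} [Field K] [IsAlgClosed K] (n : ℕ) (hn : 2 ≤ n)
    (c : ℕ → ℕ → K)
    (hzero : ∀ i j, i = 0 ∨ j = 0 ∨ n - 1 < i + j → c i j = 0)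
    (t : ℕ → K) :
    -- concretely, θ∘(φ_b × φ_b) = b^n θ for the automorphism φ_b : p_i ↦ b^i p_i
    (∀ b : K, b ≠ 0 → ∀ x y : ℕ → K,
        Bform n t (fun i => b ^ i * x i) (fun i => b ^ i * y i) =
          b ^ n * Bform n t x y) ∧
    -- for every b' ∈ k* there is a graded algebra automorphism σ of p(C) with
    -- θ∘(σ×σ) = b'·θ, and consequently p(C)_{θ∘(σ×σ)} = p(C)_{b'·θ} ≅ p(C)_θ
    (∀ b' : K, b' ≠ 0 →
      (∃ σ : (ℕ → K) ≃ₗ[K] (ℕ → K),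
          (∀ i : ℕ, ∃ d : K, σ (Pi.single i 1) = Pi.single i d) ∧
          (∀ x y, σ (dmul c x y) = dmul c (σ x) (σ y)) ∧
          (∀ x y, Bform n t (σ x) (σ y) = b' * Bform n t x y)) ∧
      (∃ φ : (ℕ → K) ≃ₗ[K] (ℕ → K),
          (∀ i : ℕ, ∃ d : K, φ (Pi.single i 1) = Pi.single i d) ∧
          ∀ x y, φ (dmul (Dmat n c (fun i => b' * t i)) x y) =
            dmul (Dmat n c t) (φ x) (φ y))) := by
  refine ⟨fun b _ x y => Bform_pow_mul n t b x y, fun b' hb' => ⟨?_, ?_⟩⟩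
  · obtain ⟨b, rfl⟩ := IsAlgClosed.exists_pow_nat_eq b' (n := n) (by omega)
    have hb : ∀ i, b ^ i ≠ 0 := fun i => pow_ne_zero i (ne_zero_pow (by omega) hb')
    refine ⟨diagEquiv _ hb, fun i => ⟨_, diagEquiv_single _ hb i⟩,
      diagEquiv_dmul _ hb fun i j => by rw [pow_add]; ring, fun x y => ?_⟩
    exact Bform_pow_mul n t b x y
  · have hd := rescaleTop_ne_zero n hb'
    exact ⟨diagEquiv _ hd, fun i => ⟨_, diagEquiv_single _ hd i⟩,
      diagEquiv_dmul _ hd (rescaleTop_mul_Dmat n hzero t hb')⟩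

theorem stmt_8 {K : Type*} [Field K] [IsAlgClosed K] (n : ℕ) (hn : 2 ≤ n)
    (c : ℕ → ℕ → K)
    (hsym : ∀ i j, c i j = c j i)
    (hassoc : ∀ i j l, 1 ≤ i → 1 ≤ j → 1 ≤ l →
      c j l * c i (j + l) = c i j * c (i + j) l)
    (hzero : ∀ i j, i = 0 ∨ j = 0 ∨ n - 1 < i + j → c i j = 0)
    (t : ℕ → K)
    (htsym : ∀ i, 1 ≤ i → i ≤ n - 1 → t i = t (n - i))
    (htinv : ∀ i j l, 1 ≤ i → 1 ≤ j → 1 ≤ l → i + j + l = n →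
      t (i + j) * c i j = t (j + l) * c j l) :
    -- concretely, θ∘(φ_b × φ_b) = b^n θ for the automorphism φ_b : p_i ↦ b^i p_i
    (∀ b : K, b ≠ 0 → ∀ x y : ℕ → K,
        Bform n t (fun i => b ^ i * x i) (fun i => b ^ i * y i) =
          b ^ n * Bform n t x y) ∧
    -- for every b' ∈ k* there is a graded algebra automorphism σ of p(C) with
    -- θ∘(σ×σ) = b'·θ, and consequently p(C)_{θ∘(σ×σ)} = p(C)_{b'·θ} ≅ p(C)_θ
    (∀ b' : K, b' ≠ 0 →
      (∃ σ : (ℕ → K) ≃ₗ[K] (ℕ → K),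
          (∀ i : ℕ, ∃ d : K, σ (Pi.single i 1) = Pi.single i d) ∧
          (∀ x y, σ (dmul c x y) = dmul c (σ x) (σ y)) ∧
          (∀ x y, Bform n t (σ x) (σ y) = b' * Bform n t x y)) ∧
      (∃ φ : (ℕ → K) ≃ₗ[K] (ℕ → K),
          (∀ i : ℕ, ∃ d : K, φ (Pi.single i 1) = Pi.single i d) ∧
          ∀ x y, φ (dmul (Dmat n c (fun i => b' * t i)) x y) =
            dmul (Dmat n c t) (φ x) (φ y))) :=
  stmt_8_general n hn c hzero t
end

section
/- Let C ∈ M_{n-1} and θ a graded 2-cocycle of p(C). If a connected component of Gr(C) is contractible, i.e., contains a vertex p = i+j for some i,j ≥ 1 with c_{ij} ≠ 0 but c_{j,n-i-j} = 0, then θ vanishes on every vertex of that connected component. -/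
/-!
The set of vertices `q ∈ [1, n-1]` with `θ_q = 0` is closed under adjacency in `Gr(C)`: across
an edge `p + q = n` this is the symmetry `θ_p = θ_{n-p}`, and across an edge `p = a+b`, `q = b+l`
the cocycle identity `θ_{a+b} c_{ab} = θ_{b+l} c_{bl}` has both coefficients nonzero. The
contractibility witness lies in this set, since there the cocycle identity reads
`θ_{i+j} c_{ij} = θ_{n-i} · 0`.
-/

/-- Adjacency condition of the graph `Gr(C)`. -/
def adjRel {K : Type*} [Field K] (n : ℕ) (c : ℕ → ℕ → K) (p q : ℕ) : Prop :=
  p + q = n ∨ ∃ i j l, 1 ≤ i ∧ 1 ≤ j ∧ 1 ≤ l ∧ i + j + l = n ∧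
    p = i + j ∧ q = j + l ∧ c i j * c j l ≠ 0

/-- The undirected simple graph `Gr(C)` on the vertices `1,...,n-1`. -/
def grC {K : Type*} [Field K] (n : ℕ) (c : ℕ → ℕ → K) : SimpleGraph ℕ where
  Adj p q := p ≠ q ∧ (adjRel n c p q ∨ adjRel n c q p)
  symm := ⟨by intro p q h; exact ⟨h.1.symm, h.2.symm⟩⟩
  loopless := ⟨by intro p h; exact h.1 rfl⟩

section GradedCocycle

variable {K : Type*} [Field K] {n : ℕ} {c : ℕ → ℕ → K} {t : ℕ → K}

theorem cocycle_eq_zero_iff_of_mul_ne_zero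
    (htinv : ∀ i j l, 1 ≤ i → 1 ≤ j → 1 ≤ l → i + j + l = n →
      t (i + j) * c i j = t (j + l) * c j l)
    {a b l : ℕ} (ha : 1 ≤ a) (hb : 1 ≤ b) (hl : 1 ≤ l) (hsum : a + b + l = n)
    (hc : c a b * c b l ≠ 0) :
    t (a + b) = 0 ↔ t (b + l) = 0 := by
  obtain ⟨hab, hbl⟩ := mul_ne_zero_iff.mp hc
  have key := htinv a b l ha hb hl hsum
  constructor
  · intro h0
    rw [h0, zero_mul] at key
    exact (mul_eq_zero.mp key.symm).resolve_right hbl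
  · intro h0
    rw [h0, zero_mul] at key
    exact (mul_eq_zero.mp key).resolve_right hab

theorem cocycle_eq_zero_of_adj
    (htsym : ∀ i, 1 ≤ i → i ≤ n - 1 → t i = t (n - i))
    (htinv : ∀ i j l, 1 ≤ i → 1 ≤ j → 1 ≤ l → i + j + l = n →
      t (i + j) * c i j = t (j + l) * c j l)
    {p q : ℕ} (hadj : (grC n c).Adj p q) (hp : 1 ≤ p ∧ p ≤ n - 1 ∧ t p = 0) :
    1 ≤ q ∧ q ≤ n - 1 ∧ t q = 0 := by
  obtain ⟨hp1, hpn, htp⟩ := hp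
  obtain ⟨-, hpq | hqp⟩ := hadj
  · rcases hpq with hsum | ⟨a, b, l, ha, hb, hl, hsum, rfl, rfl, hc⟩
    · obtain rfl : q = n - p := by omega
      exact ⟨by omega, by omega, htsym p hp1 hpn ▸ htp⟩
    · exact ⟨by omega, by omega,
        (cocycle_eq_zero_iff_of_mul_ne_zero htinv ha hb hl hsum hc).mp htp⟩
  · rcases hqp with hsum | ⟨a, b, l, ha, hb, hl, hsum, rfl, rfl, hc⟩
    · obtain rfl : q = n - p := by omega
      exact ⟨by omega, by omega, htsym p hp1 hpn ▸ htp⟩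
    · exact ⟨by omega, by omega,
        (cocycle_eq_zero_iff_of_mul_ne_zero htinv ha hb hl hsum hc).mpr htp⟩

theorem cocycle_eq_zero_of_contractible
    (hzero : ∀ i j, i = 0 ∨ j = 0 ∨ n - 1 < i + j → c i j = 0)
    (htinv : ∀ i j l, 1 ≤ i → 1 ≤ j → 1 ≤ l → i + j + l = n →
      t (i + j) * c i j = t (j + l) * c j l)
    {i j : ℕ} (hcij : c i j ≠ 0) (hvan : c j (n - i - j) = 0) :
    1 ≤ i + j ∧ i + j ≤ n - 1 ∧ t (i + j) = 0 := by
  have hsupp : 1 ≤ i ∧ 1 ≤ j ∧ i + j ≤ n - 1 := by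
    by_contra h
    exact hcij (hzero i j (by omega))
  have key := htinv i j (n - i - j) (by omega) (by omega) (by omega) (by omega)
  rw [hvan, mul_zero] at key
  exact ⟨by omega, hsupp.2.2, (mul_eq_zero.mp key).resolve_right hcij⟩

end GradedCocycle

theorem stmt_12_general {K : Type*} [Field K] (n : ℕ) (c : ℕ → ℕ → K)
    (hzero : ∀ i j, i = 0 ∨ j = 0 ∨ n - 1 < i + j → c i j = 0)
    -- a graded 2-cocycle, given as a tuple (t_i)
    (t : ℕ → K)
    (htsym : ∀ i, 1 ≤ i → i ≤ n - 1 → t i = t (n - i))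
    (htinv : ∀ i j l, 1 ≤ i → 1 ≤ j → 1 ≤ l → i + j + l = n →
      t (i + j) * c i j = t (j + l) * c j l)
    -- a contractibility witness: the vertex i+j with c_{ij} ≠ 0 and c_{j, n-i-j} = 0
    (i j : ℕ)
    (hcij : c i j ≠ 0) (hvan : c j (n - i - j) = 0) :
    -- θ vanishes on every vertex of the connected component containing i+j
    ∀ q, (grC n c).Reachable (i + j) q → 1 ≤ q → q ≤ n - 1 → t q = 0 := by
  intro q hreach
  suffices hq : 1 ≤ q ∧ q ≤ n - 1 ∧ t q = 0 from fun _ _ => hq.2.2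
  rw [SimpleGraph.reachable_iff_reflTransGen] at hreach
  induction hreach with
  | refl => exact cocycle_eq_zero_of_contractible hzero htinv hcij hvan
  | tail _ hadj ih => exact cocycle_eq_zero_of_adj htsym htinv hadj ih

theorem stmt_12 {K : Type*} [Field K] (n : ℕ) (hn : 2 ≤ n) (c : ℕ → ℕ → K)
    (hsym : ∀ i j, c i j = c j i)
    (hassoc : ∀ i j l, 1 ≤ i → 1 ≤ j → 1 ≤ l →
      c j l * c i (j + l) = c i j * c (i + j) l)
    (hzero : ∀ i j, i = 0 ∨ j = 0 ∨ n - 1 < i + j → c i j = 0)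
    -- a graded 2-cocycle, given as a tuple (t_i)
    (t : ℕ → K)
    (htsym : ∀ i, 1 ≤ i → i ≤ n - 1 → t i = t (n - i))
    (htinv : ∀ i j l, 1 ≤ i → 1 ≤ j → 1 ≤ l → i + j + l = n →
      t (i + j) * c i j = t (j + l) * c j l)
    -- a contractibility witness: the vertex i+j with c_{ij} ≠ 0 and c_{j, n-i-j} = 0
    (i j : ℕ) (hi : 1 ≤ i) (hj : 1 ≤ j)
    (hcij : c i j ≠ 0) (hvan : c j (n - i - j) = 0) :
    -- θ vanishes on every vertex of the connected component containing i+j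
    ∀ q, (grC n c).Reachable (i + j) q → 1 ≤ q → q ≤ n - 1 → t q = 0 :=
  stmt_12_general n c hzero t htsym htinv i j hcij hvan
end

section
/- Let C = (c_{ij}) be the 8×8 symmetric matrix over a field k whose only nonzero entries are c_{24}=c_{42}, c_{33}, c_{25}=c_{52}, c_{34}=c_{43}, c_{35}=c_{53}, c_{44}, and let C' be any 8×8 matrix with the same nonzero-entry positions, all equal to 1. If the DGCAs p(C) and p(C') are isomorphic as graded algebras, then c_{25} c_{33} c_{44} = c_{24} c_{34} c_{35}. -/
/-- The positions of the (possibly) nonzero entries of the 8×8 matrix of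
Example 2.9: (2,4),(4,2),(3,3),(2,5),(5,2),(3,4),(4,3),(3,5),(5,3),(4,4). -/
def pos8 (i j : ℕ) : Prop :=
  (i = 2 ∧ j = 4) ∨ (i = 4 ∧ j = 2) ∨ (i = 3 ∧ j = 3) ∨ (i = 2 ∧ j = 5) ∨
  (i = 5 ∧ j = 2) ∨ (i = 3 ∧ j = 4) ∨ (i = 4 ∧ j = 3) ∨ (i = 3 ∧ j = 5) ∨
  (i = 5 ∧ j = 3) ∨ (i = 4 ∧ j = 4)

/-- `p_i ↦ b_i p_i` is a graded isomorphism from the algebra with coefficients `c` onto the one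
with coefficients `c'`, both with basis `p_1, …, p_n`. -/
def IsGradedIso {K : Type*} [Field K] (n : ℕ) (c c' : ℕ → ℕ → K) (b : ℕ → K) : Prop :=
  (∀ i, 1 ≤ i → i ≤ n → b i ≠ 0) ∧
    ∀ i j, 1 ≤ i → 1 ≤ j → i + j ≤ n → b (i + j) * c i j = b i * b j * c' i j

namespace IsGradedIso

variable {K : Type*} [Field K] {n : ℕ} {c c' : ℕ → ℕ → K} {b : ℕ → K}

theorem ne_zero (h : IsGradedIso n c c' b) (i : ℕ) (hi : 1 ≤ i := by omega)
    (hin : i ≤ n := by omega) : b i ≠ 0 :=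
  h.1 i hi hin

theorem map_mul (h : IsGradedIso n c c' b) (i j : ℕ) (hi : 1 ≤ i := by omega)
    (hj : 1 ≤ j := by omega) (hij : i + j ≤ n := by omega) :
    b (i + j) * c i j = b i * b j * c' i j :=
  h.2 i j hi hj hij

/-- The products `c₂₅ c₃₃ c₄₄` and `c₂₄ c₃₄ c₃₅` use the same degrees `{2,5,3,3,4,4}` and
the same target degrees `{7,6,8}`, so their ratio is unchanged by any rescaling of the basis. -/
theorem mul_mul_mul_eq (hn : 8 ≤ n) (h : IsGradedIso n c c' b) :
    c 2 5 * c 3 3 * c 4 4 * (c' 2 4 * c' 3 4 * c' 3 5) =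
      c 2 4 * c 3 4 * c 3 5 * (c' 2 5 * c' 3 3 * c' 4 4) := by
  have hb678 : b 6 * b 7 * b 8 ≠ 0 :=
    mul_ne_zero (mul_ne_zero (h.ne_zero 6) (h.ne_zero 7)) (h.ne_zero 8)
  apply mul_left_cancel₀ hb678
  calc b 6 * b 7 * b 8 * (c 2 5 * c 3 3 * c 4 4 * (c' 2 4 * c' 3 4 * c' 3 5))
      = b (2 + 5) * c 2 5 * (b (3 + 3) * c 3 3) * (b (4 + 4) * c 4 4) *
          (c' 2 4 * c' 3 4 * c' 3 5) := by ring
    _ = b 2 * b 5 * c' 2 5 * (b 3 * b 3 * c' 3 3) * (b 4 * b 4 * c' 4 4) *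
          (c' 2 4 * c' 3 4 * c' 3 5) := by
        rw [h.map_mul 2 5, h.map_mul 3 3, h.map_mul 4 4]
    _ = b 2 * b 4 * c' 2 4 * (b 3 * b 4 * c' 3 4) * (b 3 * b 5 * c' 3 5) *
          (c' 2 5 * c' 3 3 * c' 4 4) := by ring
    _ = b (2 + 4) * c 2 4 * (b (3 + 4) * c 3 4) * (b (3 + 5) * c 3 5) *
          (c' 2 5 * c' 3 3 * c' 4 4) := by
        rw [h.map_mul 2 4, h.map_mul 3 4, h.map_mul 3 5]
    _ = b 6 * b 7 * b 8 * (c 2 4 * c 3 4 * c 3 5 * (c' 2 5 * c' 3 3 * c' 4 4)) := by ring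

end IsGradedIso

theorem stmt_17_general {K : Type*} [Field K] (c c' : ℕ → ℕ → K)
    -- C' has entry 1 at those positions and 0 elsewhere
    (hc'one : ∀ i j, pos8 i j → c' i j = 1)
    -- the DGCAs p(C) and p(C') are isomorphic as graded algebras, i.e. there are
    -- nonzero scalars b_1,...,b_8 with b_{i+j} c_{ij} = b_i b_j c'_{ij}
    (hiso : ∃ b : ℕ → K, (∀ i, 1 ≤ i → i ≤ 8 → b i ≠ 0) ∧
      ∀ i j, 1 ≤ i → 1 ≤ j → i + j ≤ 8 →
        b (i + j) * c i j = b i * b j * c' i j) :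
    c 2 5 * c 3 3 * c 4 4 = c 2 4 * c 3 4 * c 3 5 := by
  obtain ⟨b, hb⟩ := hiso
  have hc'pos (i j : ℕ) (hij : pos8 i j := by simp [pos8]) : c' i j = 1 := hc'one i j hij
  simpa only [mul_one, hc'pos 2 4, hc'pos 3 4, hc'pos 3 5, hc'pos 2 5, hc'pos 3 3,
    hc'pos 4 4] using
    IsGradedIso.mul_mul_mul_eq le_rfl (show IsGradedIso 8 c c' b from hb)

theorem stmt_17 {K : Type*} [Field K] (c c' : ℕ → ℕ → K)
    (hsym : ∀ i j, c i j = c j i)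
    -- C has nonzero entries exactly at the listed positions
    (hczero : ∀ i j, ¬ pos8 i j → c i j = 0)
    (hcne : ∀ i j, pos8 i j → c i j ≠ 0)
    -- C' has entry 1 at those positions and 0 elsewhere
    (hc'one : ∀ i j, pos8 i j → c' i j = 1)
    (hc'zero : ∀ i j, ¬ pos8 i j → c' i j = 0)
    -- the DGCAs p(C) and p(C') are isomorphic as graded algebras, i.e. there are
    -- nonzero scalars b_1,...,b_8 with b_{i+j} c_{ij} = b_i b_j c'_{ij}
    (hiso : ∃ b : ℕ → K, (∀ i, 1 ≤ i → i ≤ 8 → b i ≠ 0) ∧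
      ∀ i j, 1 ≤ i → 1 ≤ j → i + j ≤ 8 →
        b (i + j) * c i j = b i * b j * c' i j) :
    c 2 5 * c 3 3 * c 4 4 = c 2 4 * c 3 4 * c 3 5 :=
  stmt_17_general c c' hc'one hiso
end

section
/- Let C ∈ M_{n-1} and let D be the n×n matrix extending C by a 2-cocycle θ: d_{ij} = c_{ij} if i+j < n, d_{ij} = θ_i if i+j = n, and d_{ij} = 0 otherwise. Then D ∈ M_n, i.e., D is symmetric and satisfies d_{jk} d_{i,j+k} = d_{ij} d_{i+j,k} for all i,j,k ≥ 1. -/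
namespace Dmat

variable {K : Type*} [Field K] {n : ℕ} {c : ℕ → ℕ → K} {t : ℕ → K}

theorem of_add_ne {i j : ℕ} (h : i + j ≠ n) : Dmat n c t i j = c i j :=
  if_neg fun h' => h h'.1

theorem of_add_eq {i j : ℕ} (h : i + j = n) (hi : 1 ≤ i) (hj : 1 ≤ j) :
    Dmat n c t i j = t i :=
  if_pos ⟨h, hi, hj⟩

theorem of_eq_zero_or_eq_zero {i j : ℕ} (h : i = 0 ∨ j = 0) : Dmat n c t i j = c i j :=
  if_neg fun h' => by omega

theorem symm (hsym : ∀ i j, c i j = c j i)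
    (htsym : ∀ i, 1 ≤ i → i ≤ n - 1 → t i = t (n - i)) (i j : ℕ) :
    Dmat n c t i j = Dmat n c t j i := by
  by_cases h : i + j = n ∧ 1 ≤ i ∧ 1 ≤ j
  · obtain ⟨hij, hi, hj⟩ := h
    rw [of_add_eq hij hi hj, of_add_eq (by omega) hj hi, htsym i hi (by omega),
      show n - i = j by omega]
  · rw [Dmat, if_neg h, Dmat, if_neg fun h' => h ⟨by omega, h'.2.2, h'.2.1⟩, hsym]

/-- On the top degree `i + j + l = n` the associativity relation of `D` is exactly the
cocycle identity for `θ`, once `θ_i` is replaced by `θ_{n-i} = θ_{j+l}`. -/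
theorem assoc_of_add_eq {i j l : ℕ} (hi : 1 ≤ i) (hj : 1 ≤ j) (hl : 1 ≤ l)
    (hs : i + j + l = n) (htsym : ∀ i, 1 ≤ i → i ≤ n - 1 → t i = t (n - i))
    (htinv : t (i + j) * c i j = t (j + l) * c j l) :
    Dmat n c t j l * Dmat n c t i (j + l) = Dmat n c t i j * Dmat n c t (i + j) l := by
  rw [of_add_ne (by omega), of_add_eq (by omega) hi (by omega), of_add_ne (by omega),
    of_add_eq (by omega) (by omega) hl, htsym i hi (by omega), show n - i = j + l by omega]
  linear_combination -htinv

theorem assoc (hassoc : ∀ i j l, 1 ≤ i → 1 ≤ j → 1 ≤ l →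
      c j l * c i (j + l) = c i j * c (i + j) l)
    (hzero : ∀ i j, i = 0 ∨ j = 0 ∨ n - 1 < i + j → c i j = 0)
    (htsym : ∀ i, 1 ≤ i → i ≤ n - 1 → t i = t (n - i))
    (htinv : ∀ i j l, 1 ≤ i → 1 ≤ j → 1 ≤ l → i + j + l = n →
      t (i + j) * c i j = t (j + l) * c j l)
    {i j l : ℕ} (hi : 1 ≤ i) (hj : 1 ≤ j) (hl : 1 ≤ l) :
    Dmat n c t j l * Dmat n c t i (j + l) = Dmat n c t i j * Dmat n c t (i + j) l := by
  rcases lt_trichotomy (i + j + l) n with hs | hs | hs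
  · rw [of_add_ne (by omega), of_add_ne (by omega), of_add_ne (by omega),
      of_add_ne (by omega)]
    exact hassoc i j l hi hj hl
  · exact assoc_of_add_eq hi hj hl hs htsym (htinv i j l hi hj hl hs)
  · rw [of_add_ne (i := i) (j := j + l) (by omega), of_add_ne (i := i + j) (j := l) (by omega),
      hzero i (j + l) (by omega), hzero (i + j) l (by omega), mul_zero, mul_zero]

theorem eq_zero (hzero : ∀ i j, i = 0 ∨ j = 0 ∨ n - 1 < i + j → c i j = 0) {i j : ℕ}
    (h : i = 0 ∨ j = 0 ∨ n < i + j) : Dmat n c t i j = 0 := by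
  rcases h with h | h | h
  · rw [of_eq_zero_or_eq_zero (.inl h), hzero i j (.inl h)]
  · rw [of_eq_zero_or_eq_zero (.inr h), hzero i j (.inr (.inl h))]
  · rw [of_add_ne (by omega), hzero i j (.inr (.inr (by omega)))]

end Dmat

theorem stmt_19_general {K : Type*} [Field K] (n : ℕ) (c : ℕ → ℕ → K)
    (hsym : ∀ i j, c i j = c j i)
    (hassoc : ∀ i j l, 1 ≤ i → 1 ≤ j → 1 ≤ l →
      c j l * c i (j + l) = c i j * c (i + j) l)
    (hzero : ∀ i j, i = 0 ∨ j = 0 ∨ n - 1 < i + j → c i j = 0)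
    -- a graded 2-cocycle, given as a tuple (t_i)
    (t : ℕ → K)
    (htsym : ∀ i, 1 ≤ i → i ≤ n - 1 → t i = t (n - i))
    (htinv : ∀ i j l, 1 ≤ i → 1 ≤ j → 1 ≤ l → i + j + l = n →
      t (i + j) * c i j = t (j + l) * c j l) :
    -- then D ∈ M_n: D is symmetric, satisfies the associativity relations, and
    -- vanishes outside the admissible range
    (∀ i j, Dmat n c t i j = Dmat n c t j i) ∧
    (∀ i j l, 1 ≤ i → 1 ≤ j → 1 ≤ l →
      Dmat n c t j l * Dmat n c t i (j + l) =
        Dmat n c t i j * Dmat n c t (i + j) l) ∧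
    (∀ i j, i = 0 ∨ j = 0 ∨ n < i + j → Dmat n c t i j = 0) :=
  ⟨Dmat.symm hsym htsym, fun _ _ _ hi hj hl => Dmat.assoc hassoc hzero htsym htinv hi hj hl,
    fun _ _ => Dmat.eq_zero hzero⟩

theorem stmt_19 {K : Type*} [Field K] (n : ℕ) (hn : 2 ≤ n) (c : ℕ → ℕ → K)
    (hsym : ∀ i j, c i j = c j i)
    (hassoc : ∀ i j l, 1 ≤ i → 1 ≤ j → 1 ≤ l →
      c j l * c i (j + l) = c i j * c (i + j) l)
    (hzero : ∀ i j, i = 0 ∨ j = 0 ∨ n - 1 < i + j → c i j = 0)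
    -- a graded 2-cocycle, given as a tuple (t_i)
    (t : ℕ → K)
    (htsym : ∀ i, 1 ≤ i → i ≤ n - 1 → t i = t (n - i))
    (htinv : ∀ i j l, 1 ≤ i → 1 ≤ j → 1 ≤ l → i + j + l = n →
      t (i + j) * c i j = t (j + l) * c j l) :
    -- then D ∈ M_n: D is symmetric, satisfies the associativity relations, and
    -- vanishes outside the admissible range
    (∀ i j, Dmat n c t i j = Dmat n c t j i) ∧
    (∀ i j l, 1 ≤ i → 1 ≤ j → 1 ≤ l →
      Dmat n c t j l * Dmat n c t i (j + l) =
        Dmat n c t i j * Dmat n c t (i + j) l) ∧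
    (∀ i j, i = 0 ∨ j = 0 ∨ n < i + j → Dmat n c t i j = 0) :=
  stmt_19_general n c hsym hassoc hzero t htsym htinv
end
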